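/- arXiv:2501.14349 — 7 statements merged into one kernel-verified Lean document; each statement's English description precedes it below -/
import Mathlib

section
/- For all real x ≥ −1, ln(1 − x) ≤ −x − x²/4. -/
namespace Real

lemma log_one_sub_le_neg_sub_sq_div_two {x : ℝ} (h0 : 0 ≤ x) (h1 : x < 1) :
    log (1 - x) ≤ -x - x ^ 2 / 2 := by
  -- `-log (1 - x) = ∑ xⁿ⁺¹/(n+1)` has nonnegative terms, so it dominates its first two.
  have hsum := hasSum_pow_div_log_of_abs_lt_one (abs_lt.2 ⟨by linarith, h1⟩)
  have hpartial := sum_le_hasSum (Finset.range 2) (fun n _ ↦ by positivity) hsum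
  norm_num [Finset.sum_range_succ] at hpartial
  linarith

lemma one_sub_le_exp_neg_sub_sq_div_four {x : ℝ} (h1 : -1 ≤ x) (h0 : x ≤ 0) :
    1 - x ≤ exp (-x - x ^ 2 / 4) := by
  set t := -x - x ^ 2 / 4 with ht
  have ht_nonneg : 0 ≤ t := by nlinarith
  -- The first step amounts to `x ^ 2 / 2 ≤ t ^ 2 = x ^ 2 * (1 + x / 4) ^ 2`.
  calc 1 - x ≤ 1 + t + t ^ 2 / 2 := by nlinarith [sq_nonneg x, sq_nonneg (x * (x + 1))]
    _ ≤ exp t := quadratic_le_exp_of_nonneg ht_nonneg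

end Real

theorem log_one_sub_le (x : ℝ) (h1 : -1 ≤ x) (h2 : x < 1) :
    Real.log (1 - x) ≤ -x - x ^ 2 / 4 := by
  rcases le_total x 0 with hx | hx
  · exact (Real.log_le_iff_le_exp (by linarith)).2
      (Real.one_sub_le_exp_neg_sub_sq_div_four h1 hx)
  · linarith [Real.log_one_sub_le_neg_sub_sq_div_two hx h2, sq_nonneg x]
end

section
/- Let X ⊆ ℝⁿ be nonempty compact, x ∈ X arbitrary (possibly suboptimal), c*, ĉ ∈ ℝⁿ, and x̂ ∈ argmax_{y ∈ X} ⟨ĉ, y⟩. Define ℓ(c*) = max_{y ∈ X} ⟨c*, y⟩ − ⟨c*, x⟩. Suppose ⟨c − c', y − y'⟩ ≤ B for all c, c' ∈ Θ, y, y' ∈ X, where c*, ĉ ∈ Θ. Then ⟨ĉ − c*, x̂ − x⟩² ≤ B·⟨ĉ − c*, x̂ − x⟩ + 2B·ℓ(c*). -/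
open scoped RealInnerProductSpace

/-- The two products `(g + ℓ)(B - g)` and `ℓ(B + g)` are nonnegative; their sum is
`B g + 2 B ℓ - g²`. -/
lemma sq_le_mul_add_two_mul_mul {g ℓ B : ℝ} (hℓ : 0 ≤ ℓ) (hgℓ : -ℓ ≤ g)
    (hBg : -B ≤ g) (hgB : g ≤ B) : g ^ 2 ≤ B * g + 2 * B * ℓ := by
  nlinarith [mul_nonneg (neg_le_iff_add_nonneg.mp hgℓ) (sub_nonneg.mpr hgB),
    mul_nonneg hℓ (neg_le_iff_add_nonneg'.mp hBg)]

section InnerProductSpace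

variable {E : Type*} [NormedAddCommGroup E] [InnerProductSpace ℝ E]

lemma inner_le_sSup_image_of_isCompact {X : Set E} (hX : IsCompact X) (c : E) {y : E}
    (hy : y ∈ X) : ⟪c, y⟫ ≤ sSup ((fun y => ⟪c, y⟫) '' X) :=
  le_csSup (hX.image (continuous_const.inner continuous_id)).bddAbove ⟨y, hy, rfl⟩

lemma inner_sub_le_inner_sub_sub_of_inner_le {a b x y : E} (h : ⟪a, x⟫ ≤ ⟪a, y⟫) :
    ⟪b, x⟫ - ⟪b, y⟫ ≤ ⟪a - b, y - x⟫ := by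
  simp only [inner_sub_left, inner_sub_right]
  linarith

end InnerProductSpace

theorem instantaneous_regret_suboptimal_general {n : ℕ}
    (Θ X : Set (EuclideanSpace ℝ (Fin n))) (hcomp : IsCompact X)
    (B : ℝ)
    (cstar chat : EuclideanSpace ℝ (Fin n)) (hcstar : cstar ∈ Θ) (hchat : chat ∈ Θ)
    (x xhat : EuclideanSpace ℝ (Fin n)) (hx : x ∈ X) (hxhat : xhat ∈ X)
    (hoptxhat : ∀ y ∈ X, ⟪chat, y⟫ ≤ ⟪chat, xhat⟫)
    (hbound : ∀ c ∈ Θ, ∀ c' ∈ Θ, ∀ y ∈ X, ∀ y' ∈ X, ⟪c - c', y - y'⟫ ≤ B) :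
    ⟪chat - cstar, xhat - x⟫ ^ 2 ≤
      B * ⟪chat - cstar, xhat - x⟫ +
        2 * B * (sSup ((fun y => ⟪cstar, y⟫) '' X) - ⟪cstar, x⟫) := by
  have hsup {y} (hy : y ∈ X) := inner_le_sSup_image_of_isCompact hcomp cstar hy
  apply sq_le_mul_add_two_mul_mul
  · exact sub_nonneg.mpr (hsup hx)
  · have := inner_sub_le_inner_sub_sub_of_inner_le (b := cstar) (hoptxhat x hx)
    linarith [hsup hxhat]
  · have := hbound cstar hcstar chat hchat xhat hxhat x hx
    rw [← neg_sub, inner_neg_left] at this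
    linarith
  · exact hbound chat hchat cstar hcstar xhat hxhat x hx

/-- Inequality (7) in Theorem 4.1: self-bounding of the squared instantaneous surrogate
regret under possibly suboptimal feedback, with correction `2·B·ℓ(c*)` where
`ℓ(c*) = max_{y ∈ X} ⟪c*, y⟫ - ⟪c*, x⟫` is the suboptimality loss. -/
theorem instantaneous_regret_suboptimal {n : ℕ}
    (Θ X : Set (EuclideanSpace ℝ (Fin n))) (hne : X.Nonempty) (hcomp : IsCompact X)
    (B : ℝ) (hB : 0 < B)
    (cstar chat : EuclideanSpace ℝ (Fin n)) (hcstar : cstar ∈ Θ) (hchat : chat ∈ Θ)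
    (x xhat : EuclideanSpace ℝ (Fin n)) (hx : x ∈ X) (hxhat : xhat ∈ X)
    (hoptxhat : ∀ y ∈ X, ⟪chat, y⟫ ≤ ⟪chat, xhat⟫)
    (hbound : ∀ c ∈ Θ, ∀ c' ∈ Θ, ∀ y ∈ X, ∀ y' ∈ X, ⟪c - c', y - y'⟫ ≤ B) :
    ⟪chat - cstar, xhat - x⟫ ^ 2 ≤
      B * ⟪chat - cstar, xhat - x⟫ +
        2 * B * (sSup ((fun y => ⟪cstar, y⟫) '' X) - ⟪cstar, x⟫) :=
  instantaneous_regret_suboptimal_general Θ X hcomp B cstar chat hcstar hchat x xhat hx hxhat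
    hoptxhat hbound
end

section
/- Fix T ≥ n ≥ 1 and B > 0. For t = 1,…,n let Xₜ = { x ∈ ℝⁿ : |x(t)| ≤ (B/4)·√n, x(i) = 0 for i ≠ t }. Let c* ∈ {−1/√n, +1/√n}ⁿ be a uniformly random sign vector and xₜ ∈ argmax_{x ∈ Xₜ} ⟨c*, x⟩. If for each t the vector x̂ₜ ∈ Xₜ is independent of the coordinate c*(t), then E[⟨c*, xₜ − x̂ₜ⟩] = B/4 for each t = 1,…,n, and hence E[Σ_{t=1}^{n} ⟨c*, xₜ − x̂ₜ⟩] = B·n/4. -/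
open scoped RealInnerProductSpace

/-!
Only the coordinate `c*(t)` of the sign vector can be seen by a point of the segment `Xₜ`, so
`⟪c*, xₜ⟫ = |c*(t)| · (B/4)√n = B/4` for every sign pattern. On the other hand `x̂ₜ` does not
change when `c*(t)` is flipped while `⟪c*, x̂ₜ⟫ = c*(t) · x̂ₜ(t)` changes sign, so the sign patterns
pair off and `⟪c*, x̂ₜ⟫` averages to zero.
-/

open Finset Function

variable {ι : Type*}

def axisSegment (t : ι) (r : ℝ) : Set (EuclideanSpace ℝ ι) :=
  {x | |x t| ≤ r ∧ ∀ i, i ≠ t → x i = 0}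

variable [DecidableEq ι]

lemma eq_single_of_forall_ne_eq_zero {x : EuclideanSpace ℝ ι} {t : ι}
    (hx : ∀ i, i ≠ t → x i = 0) : x = EuclideanSpace.single t (x t) := by
  ext i
  by_cases h : i = t <;> simp [h, hx]

lemma single_mem_axisSegment {t : ι} {a r : ℝ} (ha : |a| ≤ r) :
    EuclideanSpace.single t a ∈ axisSegment t r :=
  ⟨by simpa using ha, fun i hi => by simp [hi]⟩

variable [Fintype ι]

lemma inner_eq_mul_of_forall_ne_eq_zero (c : EuclideanSpace ℝ ι) {x : EuclideanSpace ℝ ι}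
    {t : ι} (hx : ∀ i, i ≠ t → x i = 0) : ⟪c, x⟫ = c t * x t := by
  conv_lhs => rw [eq_single_of_forall_ne_eq_zero hx, EuclideanSpace.inner_single_right]
  simp [mul_comm]

lemma inner_eq_abs_mul_of_isMaxOn_axisSegment {c x : EuclideanSpace ℝ ι} {t : ι} {r : ℝ}
    (hx : x ∈ axisSegment t r) (hmax : IsMaxOn (⟪c, ·⟫) (axisSegment t r) x) :
    ⟪c, x⟫ = |c t| * r := by
  have hr : 0 ≤ r := (abs_nonneg _).trans hx.1
  apply le_antisymm
  · calc ⟪c, x⟫ = c t * x t := inner_eq_mul_of_forall_ne_eq_zero c hx.2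
      _ ≤ |c t| * |x t| := (le_abs_self _).trans (abs_mul _ _).le
      _ ≤ |c t| * r := by gcongr; exact hx.1
  · rcases le_or_gt 0 (c t) with hc | hc
    · calc |c t| * r = ⟪c, EuclideanSpace.single t r⟫ := by
            simp [EuclideanSpace.inner_single_right, abs_of_nonneg hc, mul_comm]
        _ ≤ ⟪c, x⟫ := isMaxOn_iff.1 hmax _ (single_mem_axisSegment (abs_of_nonneg hr).le)
    · calc |c t| * r = ⟪c, EuclideanSpace.single t (-r)⟫ := by
            simp [EuclideanSpace.inner_single_right, abs_of_neg hc, mul_comm]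
        _ ≤ ⟪c, x⟫ := isMaxOn_iff.1 hmax _ (single_mem_axisSegment (by rw [abs_neg, abs_of_nonneg hr]))

lemma sum_eq_zero_of_flip_neg {M : Type*} [AddCommGroup M] (t : ι) (g : (ι → Bool) → M)
    (hg : ∀ σ, g (update σ t (!σ t)) = -g σ) : ∑ σ, g σ = 0 :=
  sum_ninvolution (fun σ => update σ t (!σ t)) (fun σ => by rw [hg, add_neg_cancel])
    (fun σ _ h => by simpa using congrFun h t) (fun _ => mem_univ _) (fun σ => by simp)

lemma sum_inner_eq_zero_of_indep {t : ι} {c x : (ι → Bool) → EuclideanSpace ℝ ι}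
    (hc : ∀ σ, c (update σ t (!σ t)) t = -c σ t) (hx : ∀ σ, ∀ i, i ≠ t → x σ i = 0)
    (hindep : ∀ σ σ', (∀ i, i ≠ t → σ i = σ' i) → x σ = x σ') :
    ∑ σ, ⟪c σ, x σ⟫ = 0 := by
  refine sum_eq_zero_of_flip_neg t _ fun σ => ?_
  rw [inner_eq_mul_of_forall_ne_eq_zero _ (hx _), inner_eq_mul_of_forall_ne_eq_zero _ (hx σ), hc,
    hindep _ σ fun i hi => update_of_ne hi _ _]
  ring

theorem lower_bound_core_general (n : ℕ) (B : ℝ)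
    (cstar : (Fin n → Bool) → EuclideanSpace ℝ (Fin n))
    (hcstar : ∀ σ i, cstar σ i =
      if σ i then 1 / Real.sqrt n else -(1 / Real.sqrt n))
    (X : Fin n → Set (EuclideanSpace ℝ (Fin n)))
    (hX : ∀ t, X t = {x | |x t| ≤ (B / 4) * Real.sqrt n ∧ ∀ i, i ≠ t → x i = 0})
    (xopt xhat : Fin n → (Fin n → Bool) → EuclideanSpace ℝ (Fin n))
    (hxopt_mem : ∀ t σ, xopt t σ ∈ X t)
    (hxopt_opt : ∀ t σ, ∀ y ∈ X t, ⟪cstar σ, y⟫ ≤ ⟪cstar σ, xopt t σ⟫)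
    (hxhat_mem : ∀ t σ, xhat t σ ∈ X t)
    (hindep : ∀ t (σ σ' : Fin n → Bool), (∀ i, i ≠ t → σ i = σ' i) → xhat t σ = xhat t σ') :
    (∀ t : Fin n,
        (∑ σ : Fin n → Bool, ⟪cstar σ, xopt t σ - xhat t σ⟫) / 2 ^ n = B / 4) ∧
      (∑ t : Fin n,
        (∑ σ : Fin n → Bool, ⟪cstar σ, xopt t σ - xhat t σ⟫) / 2 ^ n) = B * n / 4 := by
  have hseg : ∀ t, X t = axisSegment t (B / 4 * Real.sqrt n) := hX
  have hcstar_abs : ∀ σ i, |cstar σ i| = 1 / Real.sqrt n := by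
    intro σ i
    rw [hcstar]
    split_ifs <;> simp
  have hopt : ∀ t σ, ⟪cstar σ, xopt t σ⟫ = B / 4 := by
    intro t σ
    have hsqrt : Real.sqrt n ≠ 0 := Real.sqrt_ne_zero'.2 (mod_cast t.pos)
    rw [inner_eq_abs_mul_of_isMaxOn_axisSegment (hseg t ▸ hxopt_mem t σ)
      (isMaxOn_iff.2 (hseg t ▸ hxopt_opt t σ)), hcstar_abs]
    field_simp
  have hhat : ∀ t, ∑ σ, ⟪cstar σ, xhat t σ⟫ = 0 := fun t =>
    sum_inner_eq_zero_of_indep (fun σ => by cases h : σ t <;> simp [hcstar, h])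
      (fun σ => (hseg t ▸ hxhat_mem t σ).2) (hindep t)
  have hround : ∀ t, (∑ σ, ⟪cstar σ, xopt t σ - xhat t σ⟫) / 2 ^ n = B / 4 := by
    intro t
    simp only [inner_sub_right, sum_sub_distrib, hopt, hhat t, sum_const, card_univ,
      Fintype.card_fun, Fintype.card_bool, Fintype.card_fin, nsmul_eq_mul]
    push_cast
    field_simp
    ring
  refine ⟨hround, ?_⟩
  simp only [hround, sum_const, card_univ, Fintype.card_fin, nsmul_eq_mul]
  ring

/-- Core computation in the Ω(n) regret lower bound (Theorem 5.1): on the axis-segment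
instance with a uniformly random sign vector `c*`, any prediction `x̂ₜ` whose value is
independent of the coordinate `c*(t)` incurs expected instantaneous regret exactly `B/4`,
hence total expected regret `B·n/4` over the first `n` rounds. -/
theorem lower_bound_core (n T : ℕ) (hn : 1 ≤ n) (hT : n ≤ T) (B : ℝ) (hB : 0 < B)
    (cstar : (Fin n → Bool) → EuclideanSpace ℝ (Fin n))
    (hcstar : ∀ σ i, cstar σ i =
      if σ i then 1 / Real.sqrt n else -(1 / Real.sqrt n))
    (X : Fin n → Set (EuclideanSpace ℝ (Fin n)))
    (hX : ∀ t, X t = {x | |x t| ≤ (B / 4) * Real.sqrt n ∧ ∀ i, i ≠ t → x i = 0})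
    (xopt xhat : Fin n → (Fin n → Bool) → EuclideanSpace ℝ (Fin n))
    (hxopt_mem : ∀ t σ, xopt t σ ∈ X t)
    (hxopt_opt : ∀ t σ, ∀ y ∈ X t, ⟪cstar σ, y⟫ ≤ ⟪cstar σ, xopt t σ⟫)
    (hxhat_mem : ∀ t σ, xhat t σ ∈ X t)
    (hindep : ∀ t (σ σ' : Fin n → Bool), (∀ i, i ≠ t → σ i = σ' i) → xhat t σ = xhat t σ') :
    (∀ t : Fin n,
        (∑ σ : Fin n → Bool, ⟪cstar σ, xopt t σ - xhat t σ⟫) / 2 ^ n = B / 4) ∧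
      (∑ t : Fin n,
        (∑ σ : Fin n → Bool, ⟪cstar σ, xopt t σ - xhat t σ⟫) / 2 ^ n) = B * n / 4 :=
  lower_bound_core_general n B cstar hcstar X hX xopt xhat hxopt_mem hxopt_opt hxhat_mem hindep
end

section
/- Fix η > 0, H > 0 with η ≤ 1/(5H), and vectors w₀, g ∈ ℝⁿ with |⟨w − w', g⟩| ≤ H for all w, w' in a convex set W containing w₀. Define f(w) = −η⟨w₀ − w, g⟩ + η²⟨w₀ − w, g⟩². Then ∇f(w)·∇f(w)ᵀ ⪯ ((1 + 2ηH)²/2)·∇²f(w) for all w ∈ W; consequently f is α-exp-concave on W with α = 2/(1 + 2ηH)². -/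
open scoped RealInnerProductSpace

/-!
Write `a = ⟪g, w₀ - w⟫`, so `|a| ≤ H` on `W`. Both claims reduce to the scalar bound
`|1 - 2ηa| ≤ 1 + 2ηH`. The gradient inequality is this bound squared. For exp-concavity, `f` is
`q(⟪w₀ - w, g⟫)` with `q t = -ηt + η²t²`, so it suffices that `exp (-α q)` is concave on
`[-H, H]`; and `exp ∘ ψ` is concave wherever `ψ'² + ψ'' ≤ 0`, which for `ψ = -α q` reads
`α (1 - 2ηt)² ≤ 2`.
-/

theorem sq_one_sub_two_mul_le_sq_one_add_two_mul {η a H : ℝ} (hη : 0 ≤ η) (ha : |a| ≤ H) :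
    (1 - 2 * η * a) ^ 2 ≤ (1 + 2 * η * H) ^ 2 := by
  have hηa : |η * a| ≤ η * H := by
    rw [abs_mul, abs_of_nonneg hη]
    exact mul_le_mul_of_nonneg_left ha hη
  obtain ⟨hlo, hhi⟩ := abs_le.mp hηa
  exact sq_le_sq' (by linarith) (by linarith)

theorem concaveOn_exp_comp_of_sq_deriv_add_deriv2_nonpos {s : Set ℝ} (hs : Convex ℝ s)
    {ψ ψ' ψ'' : ℝ → ℝ} (hψ : ∀ t, HasDerivAt ψ (ψ' t) t) (hψ' : ∀ t, HasDerivAt ψ' (ψ'' t) t)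
    (h : ∀ t ∈ interior s, ψ' t ^ 2 + ψ'' t ≤ 0) :
    ConcaveOn ℝ s (fun t => Real.exp (ψ t)) := by
  have hexp : ∀ t, HasDerivAt (fun t => Real.exp (ψ t)) (Real.exp (ψ t) * ψ' t) t :=
    fun t => (hψ t).exp
  have hexp' : ∀ t, HasDerivAt (fun t => Real.exp (ψ t) * ψ' t)
      ((ψ' t ^ 2 + ψ'' t) * Real.exp (ψ t)) t := fun t => by
    refine ((hexp t).mul (hψ' t)).congr_deriv ?_
    ring
  refine concaveOn_of_hasDerivWithinAt2_nonpos hs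
    (fun t _ => (hexp t).continuousAt.continuousWithinAt)
    (fun t _ => (hexp t).hasDerivWithinAt) (fun t _ => (hexp' t).hasDerivWithinAt)
    fun t ht => mul_nonpos_of_nonpos_of_nonneg (h t ht) (Real.exp_pos _).le

theorem concaveOn_exp_neg_mul_surrogate {s : Set ℝ} (hs : Convex ℝ s) {α η : ℝ} (hα : 0 ≤ α)
    (h : ∀ t ∈ s, α * (1 - 2 * η * t) ^ 2 ≤ 2) :
    ConcaveOn ℝ s (fun t => Real.exp (-α * (-η * t + η ^ 2 * t ^ 2))) := by
  refine concaveOn_exp_comp_of_sq_deriv_add_deriv2_nonpos hs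
    (ψ' := fun t => α * η * (1 - 2 * η * t)) (ψ'' := fun _ => -2 * α * η ^ 2)
    (fun t => ?_) (fun t => ?_) fun t ht => ?_
  · refine ((((hasDerivAt_id' t).const_mul (-η)).add
      ((hasDerivAt_pow 2 t).const_mul (η ^ 2))).const_mul (-α)).congr_deriv ?_
    ring
  · refine (((hasDerivAt_id' t).const_mul (2 * η)).const_sub 1 |>.const_mul (α * η)).congr_deriv ?_
    ring
  · have := mul_le_mul_of_nonneg_left (h t (interior_subset ht)) (mul_nonneg hα (sq_nonneg η))
    nlinarith

theorem ConcaveOn.comp_inner_sub {E : Type*} [NormedAddCommGroup E] [InnerProductSpace ℝ E]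
    {φ : ℝ → ℝ} {s : Set ℝ} (hφ : ConcaveOn ℝ s φ) {W : Set E} (hW : Convex ℝ W) {w₀ g : E}
    (hWs : ∀ w ∈ W, ⟪w₀ - w, g⟫ ∈ s) :
    ConcaveOn ℝ W (fun w => φ ⟪w₀ - w, g⟫) := by
  let ℓ : E →ᵃ[ℝ] ℝ :=
    { toFun := fun w => ⟪w₀ - w, g⟫
      linear := -innerₗ E g
      map_vadd' := fun w v => by
        change ⟪w₀ - (v + w), g⟫ = -⟪g, v⟫ + ⟪w₀ - w, g⟫
        rw [real_inner_comm v g, inner_sub_left, inner_sub_left, inner_add_left]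
        ring }
  exact (hφ.comp_affineMap ℓ).subset hWs hW

theorem surrogate_loss_expConcave_general {n : ℕ} (η H : ℝ) (hη : 0 < η) (hH : 0 < H)
    (W : Set (EuclideanSpace ℝ (Fin n))) (hW : Convex ℝ W)
    (w₀ g : EuclideanSpace ℝ (Fin n)) (hw₀ : w₀ ∈ W)
    (hbound : ∀ w ∈ W, ∀ w' ∈ W, |⟪w - w', g⟫| ≤ H) :
    (∀ w ∈ W, ∀ v : EuclideanSpace ℝ (Fin n),
        (η * (1 - 2 * η * ⟪g, w₀ - w⟫) * ⟪g, v⟫) ^ 2 ≤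
          ((1 + 2 * η * H) ^ 2 / 2) * (2 * η ^ 2 * ⟪g, v⟫ ^ 2)) ∧
      ConcaveOn ℝ W (fun w => Real.exp (-(2 / (1 + 2 * η * H) ^ 2) *
        (-η * ⟪w₀ - w, g⟫ + η ^ 2 * ⟪w₀ - w, g⟫ ^ 2))) := by
  have hbound₀ : ∀ w ∈ W, |⟪w₀ - w, g⟫| ≤ H := fun w hw => hbound w₀ hw₀ w hw
  have hscalar : ∀ t : ℝ, |t| ≤ H → (1 - 2 * η * t) ^ 2 ≤ (1 + 2 * η * H) ^ 2 :=
    fun t ht => sq_one_sub_two_mul_le_sq_one_add_two_mul hη.le ht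
  refine ⟨fun w hw v => ?_, ?_⟩
  · have ha := hscalar _ (real_inner_comm g (w₀ - w) ▸ hbound₀ w hw)
    calc (η * (1 - 2 * η * ⟪g, w₀ - w⟫) * ⟪g, v⟫) ^ 2
        = (η * ⟪g, v⟫) ^ 2 * (1 - 2 * η * ⟪g, w₀ - w⟫) ^ 2 := by ring
      _ ≤ (η * ⟪g, v⟫) ^ 2 * (1 + 2 * η * H) ^ 2 := by gcongr
      _ = _ := by ring
  · have hden : (1 + 2 * η * H) ^ 2 ≠ 0 := by positivity
    refine ConcaveOn.comp_inner_sub (s := Set.Icc (-H) H)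
      (φ := fun t => Real.exp (-(2 / (1 + 2 * η * H) ^ 2) * (-η * t + η ^ 2 * t ^ 2))) ?_ hW
      fun w hw => abs_le.mp (hbound₀ w hw)
    refine concaveOn_exp_neg_mul_surrogate (convex_Icc _ _) (by positivity) fun t ht => ?_
    calc 2 / (1 + 2 * η * H) ^ 2 * (1 - 2 * η * t) ^ 2
        ≤ 2 / (1 + 2 * η * H) ^ 2 * (1 + 2 * η * H) ^ 2 :=
          mul_le_mul_of_nonneg_left (hscalar t (abs_le.mpr ht)) (by positivity)
      _ = 2 := div_mul_cancel₀ 2 hden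

/-- Exp-concavity of the MetaGrad surrogate loss
`f(w) = −η⟪w₀ − w, g⟫ + η²⟪w₀ − w, g⟫²`: the outer product of the gradient
`∇f(w) = η(1 − 2η⟪g, w₀ − w⟫)g` is dominated by `((1 + 2ηH)²/2)` times the Hessian
`∇²f(w) = 2η²·g·gᵀ`, and consequently `f` is `2/(1 + 2ηH)²`-exp-concave on `W`. -/
theorem surrogate_loss_expConcave {n : ℕ} (η H : ℝ) (hη : 0 < η) (hH : 0 < H)
    (hηH : η ≤ 1 / (5 * H))
    (W : Set (EuclideanSpace ℝ (Fin n))) (hW : Convex ℝ W)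
    (w₀ g : EuclideanSpace ℝ (Fin n)) (hw₀ : w₀ ∈ W)
    (hbound : ∀ w ∈ W, ∀ w' ∈ W, |⟪w - w', g⟫| ≤ H) :
    (∀ w ∈ W, ∀ v : EuclideanSpace ℝ (Fin n),
        (η * (1 - 2 * η * ⟪g, w₀ - w⟫) * ⟪g, v⟫) ^ 2 ≤
          ((1 + 2 * η * H) ^ 2 / 2) * (2 * η ^ 2 * ⟪g, v⟫ ^ 2)) ∧
      ConcaveOn ℝ W (fun w => Real.exp (-(2 / (1 + 2 * η * H) ^ 2) *
        (-η * ⟪w₀ - w, g⟫ + η ^ 2 * ⟪w₀ - w, g⟫ ^ 2))) :=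
  surrogate_loss_expConcave_general η H hη hH W hW w₀ g hw₀ hbound
end

section
/- Let g₁,…,g_T ∈ ℝⁿ with ‖gₜ‖₂ ≤ λ for all t, ε > 0, A₀ = ε·Iₙ, and Aₜ = A_{t−1} + gₜgₜᵀ. Then Σ_{t=1}^{T} gₜᵀ Aₜ⁻¹ gₜ ≤ ln( det(A_T) / det(A₀) ) ≤ n·ln(T·λ²/ε + 1). -/
/-!
By the matrix determinant lemma, `det Aₜ = det A_{t-1} · (1 + qₜ)` with `qₜ = gₜᵀ A_{t-1}⁻¹ gₜ ≥ 0`,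
and by Sherman–Morrison `gₜᵀ Aₜ⁻¹ gₜ = qₜ / (1 + qₜ) ≤ log (1 + qₜ)`; summing over `t` telescopes
to `log (det A_T / det A₀)`. For the second inequality, Cauchy–Schwarz bounds the quadratic form
of `A_T` by `(ε + T λ²) ‖x‖²`, so every eigenvalue of `A_T` is at most `ε + T λ²` and
`det A_T ≤ (ε + T λ²)ⁿ`.
-/

open Matrix Finset Real

namespace Matrix

section Field

variable {ι α : Type*} [Fintype ι] [DecidableEq ι]

theorem det_one_add_vecMulVec [CommRing α] (u v : ι → α) :
    (1 + vecMulVec u v).det = 1 + v ⬝ᵥ u := by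
  rw [vecMulVec_eq Unit, det_one_add_replicateCol_mul_replicateRow]

theorem det_add_vecMulVec [CommRing α] {A : Matrix ι ι α} (hA : IsUnit A.det) (u v : ι → α) :
    (A + vecMulVec u v).det = A.det * (1 + v ⬝ᵥ (A⁻¹ *ᵥ u)) := by
  have hfactor : A + vecMulVec u v = A * (1 + vecMulVec (A⁻¹ *ᵥ u) v) := by
    rw [Matrix.mul_add, Matrix.mul_one, mul_vecMulVec, mulVec_mulVec, mul_nonsing_inv _ hA,
      one_mulVec]
  rw [hfactor, det_mul, det_one_add_vecMulVec]

theorem inv_add_vecMulVec_mulVec [Field α] {A : Matrix ι ι α} (hA : IsUnit A.det) (u v : ι → α)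
    (h : 1 + v ⬝ᵥ (A⁻¹ *ᵥ u) ≠ 0) :
    (A + vecMulVec u v)⁻¹ *ᵥ u = (1 + v ⬝ᵥ (A⁻¹ *ᵥ u))⁻¹ • (A⁻¹ *ᵥ u) := by
  have hB : IsUnit (A + vecMulVec u v).det := by
    rw [det_add_vecMulVec hA]
    exact hA.mul (isUnit_iff_ne_zero.mpr h)
  have hBu : (A + vecMulVec u v) *ᵥ (A⁻¹ *ᵥ u) = (1 + v ⬝ᵥ (A⁻¹ *ᵥ u)) • u := by
    rw [add_mulVec, mulVec_mulVec, mul_nonsing_inv _ hA, one_mulVec, vecMulVec_mulVec]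
    simp [add_smul, add_comm]
  calc (A + vecMulVec u v)⁻¹ *ᵥ u
      = (1 + v ⬝ᵥ (A⁻¹ *ᵥ u))⁻¹ • ((A + vecMulVec u v)⁻¹ *ᵥ ((1 + v ⬝ᵥ (A⁻¹ *ᵥ u)) • u)) := by
        rw [mulVec_smul, inv_smul_smul₀ h]
    _ = (1 + v ⬝ᵥ (A⁻¹ *ᵥ u))⁻¹ • (A⁻¹ *ᵥ u) := by
        rw [← hBu, mulVec_mulVec, nonsing_inv_mul _ hB, one_mulVec]

end Field

section Real

variable {ι : Type*} [Fintype ι]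

theorem PosDef.add_vecMulVec_self {A : Matrix ι ι ℝ} (hA : A.PosDef) (v : ι → ℝ) :
    (A + vecMulVec v v).PosDef :=
  hA.add_posSemidef (by simpa using posSemidef_vecMulVec_self_star v)

theorem PosDef.dotProduct_inv_add_vecMulVec_mulVec_le_log_det [DecidableEq ι] {A : Matrix ι ι ℝ}
    (hA : A.PosDef) (v : ι → ℝ) :
    v ⬝ᵥ ((A + vecMulVec v v)⁻¹ *ᵥ v) ≤ log (A + vecMulVec v v).det - log A.det := by
  have hunit : IsUnit A.det := hA.det_pos.ne'.isUnit
  set q := v ⬝ᵥ (A⁻¹ *ᵥ v)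
  have hq : 0 < 1 + q := by
    have hq0 : 0 ≤ q := by simpa using hA.inv.posSemidef.dotProduct_mulVec_nonneg v
    linarith
  rw [inv_add_vecMulVec_mulVec hunit v v hq.ne', det_add_vecMulVec hunit,
    log_mul hA.det_pos.ne' hq.ne', add_sub_cancel_left, dotProduct_smul, smul_eq_mul]
  calc (1 + q)⁻¹ * q = 1 - (1 + q)⁻¹ := by field_simp; ring
    _ ≤ log (1 + q) := one_sub_inv_le_log_of_pos hq

theorem dotProduct_vecMulVec_self_mulVec_le (v x : ι → ℝ) :
    x ⬝ᵥ (vecMulVec v v *ᵥ x) ≤ (v ⬝ᵥ v) * (x ⬝ᵥ x) := by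
  rw [vecMulVec_mulVec, dotProduct_smul, op_smul_eq_smul, smul_eq_mul, dotProduct_comm x v,
    ← sq]
  simpa only [dotProduct, sq] using sum_mul_sq_le_sq_mul_sq univ v x

theorem PosSemidef.det_le_pow_card [DecidableEq ι] {A : Matrix ι ι ℝ} (hA : A.PosSemidef) {c : ℝ}
    (h : ∀ x, x ⬝ᵥ (A *ᵥ x) ≤ c * (x ⬝ᵥ x)) : A.det ≤ c ^ Fintype.card ι := by
  have heig : ∀ i, hA.1.eigenvalues i ≤ c := by
    intro i
    set b := hA.1.eigenvectorBasis i
    have hb : ⇑b ⬝ᵥ ⇑b = 1 := by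
      have hinner := real_inner_self_eq_norm_sq b
      rw [EuclideanSpace.inner_eq_star_dotProduct, hA.1.eigenvectorBasis.orthonormal.1 i] at hinner
      simpa using hinner
    simpa [hA.1.eigenvalues_eq i, hb] using h b
  rw [hA.1.det_eq_prod_eigenvalues]
  simp only [RCLike.ofReal_real_eq_id, id]
  calc ∏ i, hA.1.eigenvalues i ≤ ∏ _i : ι, c :=
        prod_le_prod (fun i _ => hA.eigenvalues_nonneg i) (fun i _ => heig i)
    _ = c ^ Fintype.card ι := by rw [prod_const, card_univ]

end Real

end Matrix

section RankOneUpdates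

variable {ι : Type*} [Fintype ι] {T : ℕ} {g : ℕ → ι → ℝ} {A : ℕ → Matrix ι ι ℝ}
  (hA : ∀ t < T, A (t + 1) = A t + vecMulVec (g t) (g t))
include hA

theorem posDef_of_rankOne_updates (h0 : (A 0).PosDef) {t : ℕ} (ht : t ≤ T) : (A t).PosDef := by
  induction t with
  | zero => exact h0
  | succ t ih => exact hA t ht ▸ (ih (by omega)).add_vecMulVec_self (g t)

theorem sum_dotProduct_inv_mulVec_le_log_det_sub [DecidableEq ι] (h0 : (A 0).PosDef) :
    ∑ t ∈ range T, g t ⬝ᵥ ((A (t + 1))⁻¹ *ᵥ g t) ≤ log (A T).det - log (A 0).det := by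
  rw [← sum_range_sub (fun t => log (A t).det)]
  refine sum_le_sum fun t ht => ?_
  have ht : t < T := mem_range.mp ht
  rw [hA t ht]
  exact (posDef_of_rankOne_updates hA h0 ht.le).dotProduct_inv_add_vecMulVec_mulVec_le_log_det _

theorem dotProduct_mulVec_le_of_rankOne_updates {c L : ℝ} (hg : ∀ t < T, g t ⬝ᵥ g t ≤ L)
    (h0 : ∀ x, x ⬝ᵥ (A 0 *ᵥ x) ≤ c * (x ⬝ᵥ x)) {t : ℕ} (ht : t ≤ T) (x : ι → ℝ) :
    x ⬝ᵥ (A t *ᵥ x) ≤ (c + t * L) * (x ⬝ᵥ x) := by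
  induction t with
  | zero => simpa using h0 x
  | succ t ih =>
    have hx : 0 ≤ x ⬝ᵥ x := by simpa using dotProduct_star_self_nonneg x
    have hrankOne := dotProduct_vecMulVec_self_mulVec_le (g t) x
    have hgt := mul_le_mul_of_nonneg_right (hg t ht) hx
    rw [hA t ht, add_mulVec, dotProduct_add]
    push_cast
    linarith [ih (by omega)]

end RankOneUpdates

/-- Indices are shifted by one: `g t` is the paper's `g_{t+1}`, while `A t` is the paper's `Aₜ`. -/
theorem elliptical_potential_general (n T : ℕ) (ε lam : ℝ) (hε : 0 < ε)
    (g : ℕ → Fin n → ℝ) (hg : ∀ t < T, ∑ i, (g t i) ^ 2 ≤ lam ^ 2)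
    (A : ℕ → Matrix (Fin n) (Fin n) ℝ)
    (hA0 : A 0 = ε • (1 : Matrix (Fin n) (Fin n) ℝ))
    (hAt : ∀ t < T, A (t + 1) = A t + Matrix.vecMulVec (g t) (g t)) :
    (∑ t ∈ Finset.range T, dotProduct (g t) ((A (t + 1))⁻¹.mulVec (g t))) ≤
        Real.log ((A T).det / (A 0).det) ∧
      Real.log ((A T).det / (A 0).det) ≤ n * Real.log (T * lam ^ 2 / ε + 1) := by
  have h0 : (A 0).PosDef := hA0 ▸ PosDef.one.smul hε
  have hT : (A T).PosDef := posDef_of_rankOne_updates hAt h0 le_rfl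
  rw [log_div hT.det_pos.ne' h0.det_pos.ne']
  refine ⟨sum_dotProduct_inv_mulVec_le_log_det_sub hAt h0, ?_⟩
  have hgg : ∀ t < T, g t ⬝ᵥ g t ≤ lam ^ 2 := fun t ht => by
    simpa only [dotProduct, sq] using hg t ht
  have hdetT : (A T).det ≤ (ε + T * lam ^ 2) ^ n := by
    simpa using hT.posSemidef.det_le_pow_card
      (dotProduct_mulVec_le_of_rankOne_updates hAt hgg (fun x => le_of_eq (by
        rw [hA0, smul_mulVec, one_mulVec, dotProduct_smul, smul_eq_mul])) le_rfl)
  have hdet0 : (A 0).det = ε ^ n := by simp [hA0]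
  rw [hdet0]
  calc log (A T).det - log (ε ^ n) ≤ log ((ε + T * lam ^ 2) ^ n) - log (ε ^ n) := by
        gcongr
        exact hT.det_pos
    _ = n * log (T * lam ^ 2 / ε + 1) := by
        rw [log_pow, log_pow, ← mul_sub, ← log_div (by positivity) hε.ne']
        congr 2
        field_simp
        ring

/-- The elliptical potential lemma used in the ONS regret analysis. Here `A (t+1)`
plays the role of `Aₜ = A_{t−1} + gₜgₜᵀ` in the paper, and `∑ᵢ (g t i)² ≤ λ²`
expresses `‖gₜ‖₂ ≤ λ`. -/
theorem elliptical_potential (n T : ℕ) (ε lam : ℝ) (hε : 0 < ε) (hlam : 0 ≤ lam)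
    (g : ℕ → Fin n → ℝ) (hg : ∀ t < T, ∑ i, (g t i) ^ 2 ≤ lam ^ 2)
    (A : ℕ → Matrix (Fin n) (Fin n) ℝ)
    (hA0 : A 0 = ε • (1 : Matrix (Fin n) (Fin n) ℝ))
    (hAt : ∀ t < T, A (t + 1) = A t + Matrix.vecMulVec (g t) (g t)) :
    (∑ t ∈ Finset.range T, dotProduct (g t) ((A (t + 1))⁻¹.mulVec (g t))) ≤
        Real.log ((A T).det / (A 0).det) ∧
      Real.log ((A T).det / (A 0).det) ≤ n * Real.log (T * lam ^ 2 / ε + 1) :=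
  elliptical_potential_general n T ε lam hε g hg A hA0 hAt
end

section
/- Let A be a symmetric positive definite n×n matrix, g ∈ ℝⁿ, and set B = A + g·gᵀ. Then gᵀ B⁻¹ g ≤ ln(det B) − ln(det A). -/
/-!
Apply the matrix determinant lemma to `B = A + g gᵀ` rather than to `A`: since `A = B - g gᵀ`,
`det A = det B * (1 - x)` with `x = gᵀ B⁻¹ g`, so `1 - x > 0` and
`log det B - log det A = -log (1 - x) ≥ x` by `log y ≤ y - 1`.
-/

open Matrix

theorem Matrix.det_sub_vecMulVec {m α : Type*} [Fintype m] [DecidableEq m] [CommRing α]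
    {A : Matrix m m α} (hA : IsUnit A.det) (u v : m → α) :
    (A - vecMulVec u v).det = A.det * (1 - v ⬝ᵥ A⁻¹ *ᵥ u) := by
  rw [sub_eq_add_neg, ← neg_vecMulVec, vecMulVec_eq Unit, det_add_replicateCol_mul_replicateRow hA,
    det_unique (1 + _), Matrix.mul_assoc, ← replicateCol_mulVec]
  simp [mulVec_neg, sub_eq_add_neg]

/-- One-step inequality underlying the elliptical potential lemma:
for symmetric positive definite `A` and `B = A + g·gᵀ`,
`gᵀB⁻¹g ≤ ln det B − ln det A`. -/
theorem one_step_elliptical_potential (n : ℕ) (A : Matrix (Fin n) (Fin n) ℝ)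
    (hA : A.PosDef) (g : Fin n → ℝ) :
    dotProduct g ((A + Matrix.vecMulVec g g)⁻¹.mulVec g) ≤
      Real.log (A + Matrix.vecMulVec g g).det - Real.log A.det := by
  set B := A + vecMulVec g g
  have hB : B.PosDef := hA.add_posSemidef (by simpa using posSemidef_vecMulVec_self_star g)
  have hdet : A.det = B.det * (1 - g ⬝ᵥ B⁻¹ *ᵥ g) := by
    rw [← det_sub_vecMulVec hB.det_pos.ne'.isUnit, add_sub_cancel_right]
  have hpos : 0 < 1 - g ⬝ᵥ B⁻¹ *ᵥ g := pos_of_mul_pos_right (hdet ▸ hA.det_pos) hB.det_pos.le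
  rw [hdet, Real.log_mul hB.det_pos.ne' hpos.ne']
  linarith [Real.log_le_sub_one_of_pos hpos]
end

section
/- Let c*, ĉ ∈ ℝⁿ with ‖c*‖₂ = ‖ĉ‖₂ = 1 and angle θ(c*, ĉ) < π/2 between them. Let X ⊆ (1/2)·Bⁿ (the Euclidean ball of radius 1/2) be nonempty compact, x ∈ argmax_{y ∈ X} ⟨c*, y⟩, and x̂ ∈ argmax_{y ∈ X} ⟨ĉ, y⟩. Then ⟨c*, x − x̂⟩ ≤ sin θ(c*, ĉ). -/
/-!
Write `c* = t ĉ + w` with `t = ⟪c*, ĉ⟫ = cos θ` and `w ⊥ ĉ`, so that `‖w‖ = sin θ`. Since `x̂`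
maximises `⟪ĉ, ·⟫` over `X`, `⟪ĉ, x - x̂⟫ ≤ 0`, and `t > 0` because `θ < π/2`; hence
`⟪c*, x - x̂⟫ ≤ ⟪w, x - x̂⟫ ≤ sin θ · ‖x - x̂‖`, and `‖x - x̂‖ ≤ 1` as `X` lies in the ball of
radius `1/2`.
-/

open scoped RealInnerProductSpace

section InnerProductSpace

variable {E : Type*} [NormedAddCommGroup E] [InnerProductSpace ℝ E]

theorem norm_sub_inner_smul_sq_of_norm_eq_one {v : E} (hv : ‖v‖ = 1) (u : E) :
    ‖u - ⟪u, v⟫ • v‖ ^ 2 = ‖u‖ ^ 2 - ⟪u, v⟫ ^ 2 := by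
  rw [norm_sub_sq_real, real_inner_smul_right, norm_smul, Real.norm_eq_abs, hv,
    mul_one, sq_abs]
  ring

theorem inner_le_sqrt_one_sub_sq_mul_norm {u v d : E} (hu : ‖u‖ = 1) (hv : ‖v‖ = 1)
    (huv : 0 ≤ ⟪u, v⟫) (hvd : ⟪v, d⟫ ≤ 0) :
    ⟪u, d⟫ ≤ √(1 - ⟪u, v⟫ ^ 2) * ‖d‖ := by
  set w := u - ⟪u, v⟫ • v
  have hw : ‖w‖ = √(1 - ⟪u, v⟫ ^ 2) := by
    rw [← one_pow 2, ← hu, ← norm_sub_inner_smul_sq_of_norm_eq_one hv,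
      Real.sqrt_sq (norm_nonneg _)]
  have hdecomp : ⟪u, d⟫ = ⟪u, v⟫ * ⟪v, d⟫ + ⟪w, d⟫ := by
    rw [inner_sub_left, real_inner_smul_left]
    ring
  calc ⟪u, d⟫ = ⟪u, v⟫ * ⟪v, d⟫ + ⟪w, d⟫ := hdecomp
    _ ≤ 0 + ‖w‖ * ‖d‖ := add_le_add (mul_nonpos_of_nonneg_of_nonpos huv hvd)
        (real_inner_le_norm w d)
    _ = √(1 - ⟪u, v⟫ ^ 2) * ‖d‖ := by rw [zero_add, hw]

end InnerProductSpace

theorem regret_le_sin_angle_general {n : ℕ} (cstar chat : EuclideanSpace ℝ (Fin n))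
    (hcstar : ‖cstar‖ = 1) (hchat : ‖chat‖ = 1)
    (hangle : Real.arccos ⟪cstar, chat⟫ < Real.pi / 2)
    (X : Set (EuclideanSpace ℝ (Fin n)))
    (hball : X ⊆ Metric.closedBall 0 (1 / 2))
    (x xhat : EuclideanSpace ℝ (Fin n)) (hx : x ∈ X) (hxhat : xhat ∈ X)
    (hoptxhat : ∀ y ∈ X, ⟪chat, y⟫ ≤ ⟪chat, xhat⟫) :
    ⟪cstar, x - xhat⟫ ≤ Real.sin (Real.arccos ⟪cstar, chat⟫) := by
  have hpos : 0 < ⟪cstar, chat⟫ := Real.arccos_lt_pi_div_two.mp hangle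
  have hopt : ⟪chat, x - xhat⟫ ≤ 0 := by
    rw [inner_sub_right, sub_nonpos]
    exact hoptxhat x hx
  have hdist : ‖x - xhat‖ ≤ 1 := by
    have h₁ := mem_closedBall_zero_iff.mp (hball hx)
    have h₂ := mem_closedBall_zero_iff.mp (hball hxhat)
    linarith [norm_sub_le x xhat]
  rw [Real.sin_arccos]
  calc ⟪cstar, x - xhat⟫ ≤ √(1 - ⟪cstar, chat⟫ ^ 2) * ‖x - xhat‖ :=
        inner_le_sqrt_one_sub_sq_mul_norm hcstar hchat hpos.le hopt
    _ ≤ √(1 - ⟪cstar, chat⟫ ^ 2) := mul_le_of_le_one_right (Real.sqrt_nonneg _) hdist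

/-- Lemma 1 of Besbes et al.: for unit vectors `c*`, `ĉ` at angle `θ(c*, ĉ) < π/2`,
and a nonempty compact `X ⊆ (1/2)·Bⁿ`, optimal actions `x` for `c*` and `x̂` for `ĉ`
satisfy `⟪c*, x − x̂⟫ ≤ sin θ(c*, ĉ)`. -/
theorem regret_le_sin_angle {n : ℕ} (cstar chat : EuclideanSpace ℝ (Fin n))
    (hcstar : ‖cstar‖ = 1) (hchat : ‖chat‖ = 1)
    (hangle : Real.arccos ⟪cstar, chat⟫ < Real.pi / 2)
    (X : Set (EuclideanSpace ℝ (Fin n))) (hne : X.Nonempty) (hcomp : IsCompact X)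
    (hball : X ⊆ Metric.closedBall 0 (1 / 2))
    (x xhat : EuclideanSpace ℝ (Fin n)) (hx : x ∈ X) (hxhat : xhat ∈ X)
    (hoptx : ∀ y ∈ X, ⟪cstar, y⟫ ≤ ⟪cstar, x⟫)
    (hoptxhat : ∀ y ∈ X, ⟪chat, y⟫ ≤ ⟪chat, xhat⟫) :
    ⟪cstar, x - xhat⟫ ≤ Real.sin (Real.arccos ⟪cstar, chat⟫) :=
  regret_le_sin_angle_general cstar chat hcstar hchat hangle X hball x xhat hx hxhat hoptxhat
end
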